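/- Let $z^\star : (e-2, 1] \to (0,1)$ assign to $p$ the unique solution in $(0,1)$ of $z e^{-z} = (2+p)^{-1}$, and define $f(p) = \frac{2+p}{2}\cdot\frac{2+p^2}{2+p^3}\cdot z^\star(p)$. Then $\lim_{p \to (e-2)^+} z^\star(p) = 1$ and hence $\lim_{p\to(e-2)^+} f(p) = \frac{e}{2}\cdot\frac{2+(e-2)^2}{2+(e-2)^3} > 1$, while $f(1) = \frac{3}{2} z^\star(1) < 1$. Consequently the normal form coefficient $c_{xx}$, which is positive iff $f(p) > 1$, is positive for $p$ near $e-2$ and negative at $p = 1$. -/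
import Mathlib

open Real Filter Set

private lemma exp_quad {t : ℝ} (ht : 0 ≤ t) (ht1 : t ≤ 1) :
    Real.exp t ≤ 1 + t + t ^ 2 := by
  have h := Real.exp_bound (x := t) (by rw [abs_of_nonneg ht]; exact ht1) (n := 2) (by norm_num)
  have hs : ∑ m ∈ Finset.range 2, t ^ m / (m.factorial : ℝ) = 1 + t := by
    simp [Finset.sum_range_succ]
  rw [hs, abs_of_nonneg ht] at h
  have h' := (abs_le.1 h).2
  norm_num [Nat.factorial] at h'
  nlinarith [sq_nonneg t]

private lemma cube_bound {z p : ℝ} (hz0 : 0 < z) (hz1 : z < 1)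
    (heq : z * Real.exp (-z) = (2 + p)⁻¹) (hp : 0 < 2 + p) :
    (1 - z) ^ 3 ≤ 1 - Real.exp 1 / (2 + p) := by
  set t := 1 - z with ht
  have ht0 : 0 ≤ t := by linarith
  have ht1 : t ≤ 1 := by linarith
  have key : Real.exp 1 * (z * Real.exp (-z)) ≤ 1 - t ^ 3 := by
    have h1 : Real.exp 1 * (z * Real.exp (-z)) = z * Real.exp (1 - z) := by
      rw [show (1 : ℝ) - z = 1 + -z by ring, Real.exp_add]; ring
    rw [h1]
    have h2 := exp_quad ht0 ht1
    have hz : z = 1 - t := by rw [ht]; ring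
    have h3 : z * Real.exp (1 - z) = (1 - t) * Real.exp t := by
      rw [hz]; ring_nf
    rw [h3]
    nlinarith [Real.exp_pos t]
  rw [heq] at key
  have h4 : Real.exp 1 * (2 + p)⁻¹ = Real.exp 1 / (2 + p) := by ring
  rw [h4] at key; linarith

private lemma exp_two_thirds_lt_two : Real.exp (2/3) < 2 := by
  by_contra h
  push_neg at h
  have h3 : (2:ℝ) ^ 3 ≤ Real.exp (2/3) ^ 3 := pow_le_pow_left₀ (by norm_num) h 3
  have h4 : Real.exp (2/3) ^ 3 = Real.exp 2 := by
    rw [← Real.exp_nat_mul]; norm_num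
  have h5 : Real.exp 2 = Real.exp 1 ^ 2 := by
    rw [← Real.exp_nat_mul]; norm_num
  rw [h4, h5] at h3
  nlinarith [Real.exp_one_lt_d9, Real.exp_pos 1]

/-- Behavior of `f(p) = (2+p)/2 · (2+p²)/(2+p³) · z⋆(p)` near the endpoints:
`z⋆(p) → 1` as `p → (e-2)⁺`, hence `f(p) → (e/2)·(2+(e-2)²)/(2+(e-2)³) > 1`, so
`f p > 1` for `p` near `e-2`; while `f 1 = (3/2) z⋆(1) < 1`. -/
theorem explosive_onset_sign_change
    (zs : ℝ → ℝ)
    (hzs : ∀ p ∈ Set.Ioc (Real.exp 1 - 2) 1,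
        zs p ∈ Set.Ioo (0:ℝ) 1 ∧ zs p * Real.exp (-(zs p)) = (2 + p)⁻¹)
    (f : ℝ → ℝ)
    (hf : ∀ p, f p = (2 + p) / 2 * ((2 + p ^ 2) / (2 + p ^ 3)) * zs p) :
    Filter.Tendsto zs (nhdsWithin (Real.exp 1 - 2) (Set.Ioi (Real.exp 1 - 2))) (nhds 1) ∧
    Filter.Tendsto f (nhdsWithin (Real.exp 1 - 2) (Set.Ioi (Real.exp 1 - 2)))
      (nhds (Real.exp 1 / 2 * ((2 + (Real.exp 1 - 2) ^ 2) / (2 + (Real.exp 1 - 2) ^ 3)))) ∧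
    1 < Real.exp 1 / 2 * ((2 + (Real.exp 1 - 2) ^ 2) / (2 + (Real.exp 1 - 2) ^ 3)) ∧
    (∀ᶠ p in nhdsWithin (Real.exp 1 - 2) (Set.Ioi (Real.exp 1 - 2)), 1 < f p) ∧
    f 1 = 3 / 2 * zs 1 ∧ f 1 < 1 := by
  have he_lt : Real.exp 1 < 2.7182818286 := Real.exp_one_lt_d9
  have he_gt : (2.7182818283:ℝ) < Real.exp 1 := Real.exp_one_gt_d9
  have he2 : (0:ℝ) < Real.exp 1 - 2 := by linarith
  have hd3 : (0:ℝ) < 2 + (Real.exp 1 - 2) ^ 3 := by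
    have := pow_nonneg he2.le 3; linarith
  set a := Real.exp 1 - 2 with ha
  set F := nhdsWithin a (Set.Ioi a) with hF
  have ha1 : a < 1 := by rw [ha]; nlinarith
  have hev : ∀ᶠ p in F, p ∈ Set.Ioc a 1 := by
    have h1 : ∀ᶠ p in F, p ∈ Set.Ioi a := eventually_mem_nhdsWithin
    have h2 : ∀ᶠ p in nhds a, p < 1 := eventually_lt_nhds ha1
    filter_upwards [h1, nhdsWithin_le_nhds h2] with p hp hp1
    exact ⟨hp, le_of_lt hp1⟩
  have hfacts : ∀ᶠ p in F, 0 < zs p ∧ zs p < 1 ∧ zs p * Real.exp (-(zs p)) = (2 + p)⁻¹ := by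
    filter_upwards [hev] with p hp
    obtain ⟨⟨h1, h2⟩, h3⟩ := hzs p hp
    exact ⟨h1, h2, h3⟩
  -- limit of zs
  have hzlim : Filter.Tendsto zs F (nhds 1) := by
    have hslim : Filter.Tendsto (fun p => 1 - Real.exp 1 / (2 + p)) F (nhds 0) := by
      have hc : ContinuousAt (fun p : ℝ => 1 - Real.exp 1 / (2 + p)) a := by
        apply ContinuousAt.sub continuousAt_const
        apply ContinuousAt.div continuousAt_const (by fun_prop)
        rw [ha]; nlinarith
      have hval : 1 - Real.exp 1 / (2 + a) = 0 := by
        rw [ha, show (2:ℝ) + (Real.exp 1 - 2) = Real.exp 1 by ring,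
          div_self (Real.exp_pos 1).ne']
        ring
      have := hc.tendsto
      rw [hval] at this
      exact this.mono_left nhdsWithin_le_nhds
    have hcube : Filter.Tendsto (fun p => (1 - zs p) ^ 3) F (nhds 0) := by
      apply tendsto_of_tendsto_of_tendsto_of_le_of_le' tendsto_const_nhds hslim
      · filter_upwards [hfacts] with p ⟨h1, h2, h3⟩
        exact pow_nonneg (by linarith) 3
      · filter_upwards [hfacts, hev] with p ⟨h1, h2, h3⟩ hp
        have hp2 : 0 < 2 + p := by
          have h4 := hp.1
          rw [ha] at h4
          nlinarith
        exact cube_bound h1 h2 h3 hp2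
    have hroot : Filter.Tendsto (fun p => ((1 - zs p) ^ 3) ^ ((3:ℕ):ℝ)⁻¹) F (nhds 0) := by
      have hc : ContinuousAt (fun x : ℝ => x ^ (((3:ℕ):ℝ)⁻¹)) 0 :=
        Real.continuousAt_rpow_const 0 _ (Or.inr (by norm_num))
      have h0 : (0:ℝ) ^ (((3:ℕ):ℝ)⁻¹) = 0 := Real.zero_rpow (by norm_num)
      have := hc.tendsto.comp hcube
      rwa [h0] at this
    have h1mz : Filter.Tendsto (fun p => 1 - zs p) F (nhds 0) := by
      apply Filter.Tendsto.congr' _ hroot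
      filter_upwards [hfacts] with p ⟨h1, h2, h3⟩
      exact Real.pow_rpow_inv_natCast (by linarith) (by norm_num)
    have h2 : Filter.Tendsto (fun p => 1 - (1 - zs p)) F (nhds (1 - 0)) :=
      tendsto_const_nhds.sub h1mz
    simpa using h2
  -- limit of f
  have hflim : Filter.Tendsto f F
      (nhds (Real.exp 1 / 2 * ((2 + a ^ 2) / (2 + a ^ 3)))) := by
    have hgc : ContinuousAt (fun p : ℝ => (2 + p) / 2 * ((2 + p ^ 2) / (2 + p ^ 3))) a := by
      apply ContinuousAt.mul (by fun_prop)
      apply ContinuousAt.div (by fun_prop) (by fun_prop)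
      rw [ha]; exact hd3.ne'
    have hg := hgc.tendsto.mono_left (nhdsWithin_le_nhds (s := Set.Ioi a))
    rw [show (2:ℝ) + a = Real.exp 1 by rw [ha]; ring] at hg
    have h5 := hg.mul hzlim
    rw [mul_one] at h5
    exact h5.congr fun p => (hf p).symm
  -- the value exceeds 1
  have hgt : (1:ℝ) < Real.exp 1 / 2 * ((2 + a ^ 2) / (2 + a ^ 3)) := by
    rw [div_mul_div_comm,
      lt_div_iff₀ (by linarith : (0:ℝ) < 2 * (2 + a ^ 3)), one_mul, ha]
    nlinarith [sq_nonneg (Real.exp 1 - 2.7182818283), sq_nonneg (Real.exp 1 - 2),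
      Real.exp_pos 1]
  refine ⟨hzlim, by rw [ha] at hflim ⊢; exact hflim, by rw [ha] at hgt ⊢; exact hgt,
    hflim.eventually (eventually_gt_nhds hgt), by rw [hf 1]; norm_num, ?_⟩
  -- f 1 < 1
  have h1 : (1:ℝ) ∈ Set.Ioc a 1 := ⟨by rw [ha]; linarith, le_refl 1⟩
  obtain ⟨⟨hz0, hz1⟩, heq⟩ := hzs 1 h1
  set z := zs 1 with hz
  have hval : z * Real.exp (-z) = 1/3 := by rw [heq]; norm_num
  have hlt : z < 2/3 := by
    by_contra h
    push_neg at h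
    have hinv : Real.exp z * Real.exp (-z) = 1 := by rw [← Real.exp_add]; simp
    have hmul : Real.exp z * (z * Real.exp (-z)) = Real.exp z * (1/3) := by rw [hval]
    have hexpz : Real.exp z = 3 * z := by linear_combination 3*z*hinv - 3*hmul
    have hCE : Real.exp (2/3) * Real.exp (z - 2/3) = 3 * z := by
      rw [← Real.exp_add, show (2:ℝ)/3 + (z - 2/3) = z by ring, hexpz]
    have hb : (1 - (z - 2/3)) * Real.exp (z - 2/3) ≤ 1 := by
      have hb1 := Real.add_one_le_exp (-(z - 2/3))
      have hb2 : Real.exp (-(z-2/3)) * Real.exp (z - 2/3) = 1 := by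
        rw [← Real.exp_add]; simp
      nlinarith [Real.exp_pos (z - 2/3)]
    have hq : 2 ≤ 5 * z - 3 * z ^ 2 := by nlinarith
    have h23 := exp_two_thirds_lt_two
    have hmul2 := mul_le_mul_of_nonneg_left hb (Real.exp_pos (2/3:ℝ)).le
    nlinarith [Real.exp_pos (z - 2/3), Real.exp_pos (2/3:ℝ), hCE, hmul2, hq, h23]
  rw [hf 1]
  norm_num
  nlinarith
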